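/- arXiv:2406.08674 — 4 statements merged into one kernel-verified Lean document; each statement's English description precedes it below -/
import Mathlib

section
/- Let U, V ⊆ ℂ be open sets and let ψ : U → V be a holomorphic bijection whose inverse is also holomorphic. Let h : V → ℝ be continuous, let Q ∈ ℝ, and let f : ℂ → ℝ be twice continuously differentiable with compact support contained in U. Then ∫_U (h(ψ(z)) + Q·log|ψ'(z)|)·Δf(z) dz = ∫_V h(w)·Δ(f∘ψ⁻¹)(w) dw, where f∘ψ⁻¹ is extended by 0 outside V. (This is the deterministic-field version of the statement that the Gaussian curvature of an LQG surface, defined weakly by pairing (γ/2)Φ against Δf, is invariant under the LQG coordinate change Φ ↦ Φ∘ψ + Q·log|ψ'|.) -/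
open MeasureTheory

/-- The Laplacian of `f : ℂ → ℝ`: the sum of the two second partial derivatives
(trace of the second Fréchet derivative, identifying `ℂ` with `ℝ²`). -/
noncomputable def laplacian (f : ℂ → ℝ) (z : ℂ) : ℝ :=
  fderiv ℝ (fun w => fderiv ℝ f w 1) z 1 +
    fderiv ℝ (fun w => fderiv ℝ f w Complex.I) z Complex.I

/-!
Near each point of `U` we have `f = (f ∘ ψ⁻¹) ∘ ψ`, and for holomorphic `ψ` the Laplacian
transforms as `Δ(g ∘ ψ) = |ψ'|² (Δg) ∘ ψ`. As `|ψ'|²` is also the Jacobian of `ψ`, the change of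
variables `w = ψ z` turns `∫_V h Δ(f ∘ ψ⁻¹)` into `∫_U (h ∘ ψ) Δf`. The remaining term vanishes:
`ψ'` has no zeros because `ψ` has a holomorphic inverse, so `log |ψ'|` is harmonic on `U`, and by
Green's identity a harmonic function pairs to zero with the Laplacian of a test function supported
in `U`.
-/

open Filter Set Complex
open scoped Topology Laplacian ContDiff

section Smoothness

variable {E F : Type*} [NormedAddCommGroup E] [NormedSpace ℝ E] [NormedAddCommGroup F]
  [NormedSpace ℝ F] {f : E → F}

theorem ContDiff.fderiv_apply_const {m n : WithTop ℕ∞} (hf : ContDiff ℝ n f) (hmn : m + 1 ≤ n)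
    (v : E) : ContDiff ℝ m (fderiv ℝ f · v) :=
  (hf.fderiv_right hmn).clm_apply contDiff_const

theorem ContDiff.continuous_fderiv_fderiv_apply (hf : ContDiff ℝ 2 f) (v : E) :
    Continuous fun x => fderiv ℝ (fderiv ℝ f · v) x v :=
  ((hf.fderiv_apply_const (m := 1) le_rfl v).continuous_fderiv one_ne_zero).clm_apply
    continuous_const

theorem contDiff_of_tsupport {n : WithTop ℕ∞} (hf : ∀ x ∈ tsupport f, ContDiffAt ℝ n f x) :
    ContDiff ℝ n f :=
  contDiff_iff_contDiffAt.2 fun x => by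
    by_cases hx : x ∈ tsupport f
    · exact hf x hx
    · exact contDiffAt_const.congr_of_eventuallyEq (notMem_tsupport_iff_eventuallyEq.1 hx)

end Smoothness

section Laplacian

variable {f : ℂ → ℝ} {z : ℂ}

theorem laplacian_congr_nhds {g : ℂ → ℝ} (h : f =ᶠ[𝓝 z] g) : laplacian f z = laplacian g z := by
  have hD (v : ℂ) : fderiv ℝ (fderiv ℝ f · v) z = fderiv ℝ (fderiv ℝ g · v) z :=
    (h.fderiv.fun_comp fun L => L v).fderiv_eq
  simp only [laplacian, hD]

theorem laplacian_eq_zero_of_notMem_tsupport (hz : z ∉ tsupport f) : laplacian f z = 0 := by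
  rw [laplacian_congr_nhds (notMem_tsupport_iff_eventuallyEq.1 hz)]
  simp [laplacian]

theorem tsupport_laplacian_subset : tsupport (laplacian f) ⊆ tsupport f :=
  closure_minimal (fun _ hz => by_contra fun h => hz (laplacian_eq_zero_of_notMem_tsupport h))
    (isClosed_tsupport f)

theorem HasCompactSupport.laplacian (hf : HasCompactSupport f) :
    HasCompactSupport (laplacian f) :=
  hf.of_isClosed_subset (isClosed_tsupport _) tsupport_laplacian_subset

theorem ContDiff.continuous_laplacian (hf : ContDiff ℝ 2 f) : Continuous (laplacian f) :=
  (hf.continuous_fderiv_fderiv_apply 1).add (hf.continuous_fderiv_fderiv_apply I)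

theorem laplacian_eq_fderiv_fderiv (hf : DifferentiableAt ℝ (fderiv ℝ f) z) :
    laplacian f z = fderiv ℝ (fderiv ℝ f) z 1 1 + fderiv ℝ (fderiv ℝ f) z I I := by
  simp [laplacian, fderiv_clm_apply hf (differentiableAt_const _)]

theorem ContDiffAt.laplacian_eq (hf : ContDiffAt ℝ 2 f z) : laplacian f z = Δ f z := by
  rw [laplacian_eq_fderiv_fderiv ((hf.fderiv_right (m := 1) le_rfl).differentiableAt one_ne_zero)]
  simp [InnerProductSpace.laplacian_eq_iteratedFDeriv_complexPlane, iteratedFDeriv_two_apply]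

theorem InnerProductSpace.HarmonicAt.laplacian_eq_zero (hf : HarmonicAt f z) :
    laplacian f z = 0 :=
  hf.1.laplacian_eq.trans hf.2.self_of_nhds

end Laplacian

theorem deriv_ne_zero_of_leftInverse {𝕜 : Type*} [NontriviallyNormedField 𝕜] {ψ φ : 𝕜 → 𝕜}
    {z : 𝕜} (hψ : DifferentiableAt 𝕜 ψ z) (hφ : DifferentiableAt 𝕜 φ (ψ z))
    (hleft : (fun w => φ (ψ w)) =ᶠ[𝓝 z] id) : deriv ψ z ≠ 0 := by
  have hcomp : HasDerivAt (fun w => φ (ψ w)) 1 z := (hasDerivAt_id z).congr_of_eventuallyEq hleft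
  intro h
  have := hcomp.unique (hφ.hasDerivAt.comp z hψ.hasDerivAt)
  simp [h] at this

section ConformalInvariance

theorem DifferentiableAt.fderiv_real_apply {G : ℂ → ℂ} {w : ℂ} (hG : DifferentiableAt ℂ G w)
    (v : ℂ) : fderiv ℝ G w v = v * deriv G w := by
  rw [hG.fderiv_restrictScalars ℝ, hG.hasDerivAt.hasFDerivAt.fderiv]
  simp

theorem ContinuousLinearMap.apply_add_apply_I_mul {F : Type*} [NormedAddCommGroup F]
    [NormedSpace ℝ F] (B : ℂ →L[ℝ] ℂ →L[ℝ] F) (c : ℂ) :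
    B c c + B (I * c) (I * c) = normSq c • (B 1 1 + B I I) := by
  obtain ⟨a, b, rfl⟩ : ∃ a b : ℝ, c = a • 1 + b • I :=
    ⟨c.re, c.im, by apply Complex.ext <;> simp⟩
  have hI : I * (a • 1 + b • I) = (-b) • (1 : ℂ) + a • I := by apply Complex.ext <;> simp
  have hn : normSq (a • 1 + b • I) = a * a + b * b := by simp [normSq_apply]
  simp only [hI, hn, map_add, map_smul, add_apply, smul_apply]
  module

variable {f : ℂ → ℝ} {ψ : ℂ → ℂ} {z : ℂ}

theorem fderiv_fderiv_comp_apply (hψ : AnalyticAt ℂ ψ z) (hf : ContDiffAt ℝ 2 f (ψ z)) (v : ℂ) :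
    fderiv ℝ (fun w => fderiv ℝ (fun x => f (ψ x)) w v) z v =
      fderiv ℝ (fderiv ℝ f) (ψ z) (v * deriv ψ z) (v * deriv ψ z) +
        fderiv ℝ f (ψ z) (v * v * deriv (deriv ψ) z) := by
  have hψ₁ : DifferentiableAt ℝ ψ z := hψ.differentiableAt.restrictScalars ℝ
  have hψ' : DifferentiableAt ℂ (deriv ψ) z := hψ.deriv.differentiableAt
  have hDf : DifferentiableAt ℝ (fderiv ℝ f) (ψ z) :=
    (hf.fderiv_right (m := 1) le_rfl).differentiableAt one_ne_zero
  have hf_near : ∀ᶠ w in 𝓝 z, DifferentiableAt ℝ f (ψ w) :=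
    hψ.continuousAt.eventually
      (hf.eventually (by simp) |>.mono fun _ h => h.differentiableAt two_ne_zero)
  have hchain : (fun w => fderiv ℝ (fun x => f (ψ x)) w v) =ᶠ[𝓝 z]
      fun w => fderiv ℝ f (ψ w) (v * deriv ψ w) := by
    filter_upwards [hf_near, hψ.eventually_analyticAt] with w hfw hψw
    rw [fderiv_fun_comp w hfw (hψw.differentiableAt.restrictScalars ℝ),
      ContinuousLinearMap.comp_apply, hψw.differentiableAt.fderiv_real_apply]
  rw [hchain.fderiv_eq, fderiv_clm_apply (c := fun w => fderiv ℝ f (ψ w)) (hDf.comp z hψ₁)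
      ((hψ'.restrictScalars ℝ).const_mul v), fderiv_fun_comp z hDf hψ₁,
    fderiv_const_mul (hψ'.restrictScalars ℝ)]
  simp [hψ.differentiableAt.fderiv_real_apply, hψ'.fderiv_real_apply, mul_assoc, mul_comm v,
    add_comm]

theorem laplacian_comp_of_analyticAt (hψ : AnalyticAt ℂ ψ z) (hf : ContDiffAt ℝ 2 f (ψ z)) :
    laplacian (fun w => f (ψ w)) z = normSq (deriv ψ z) * laplacian f (ψ z) := by
  have hDf : DifferentiableAt ℝ (fderiv ℝ f) (ψ z) :=
    (hf.fderiv_right (m := 1) le_rfl).differentiableAt one_ne_zero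
  -- the terms involving `ψ''` cancel
  have hcancel : (1 : ℂ) * 1 * deriv (deriv ψ) z + I * I * deriv (deriv ψ) z = 0 := by
    simp
  rw [laplacian, fderiv_fderiv_comp_apply hψ hf, fderiv_fderiv_comp_apply hψ hf,
    add_add_add_comm, ← map_add, hcancel, map_zero, add_zero, one_mul,
    ContinuousLinearMap.apply_add_apply_I_mul, laplacian_eq_fderiv_fderiv hDf, smul_eq_mul]

theorem laplacian_eq_normSq_deriv_mul_laplacian_comp {φ : ℂ → ℂ} (hψ : AnalyticAt ℂ ψ z)
    (hφ : AnalyticAt ℂ φ (ψ z)) (hleft : (fun w => φ (ψ w)) =ᶠ[𝓝 z] id)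
    (hf : ContDiffAt ℝ 2 f z) :
    laplacian f z = normSq (deriv ψ z) * laplacian (fun w => f (φ w)) (ψ z) := by
  have hfφ : ContDiffAt ℝ 2 f (φ (ψ z)) := by rwa [show φ (ψ z) = z from hleft.self_of_nhds]
  rw [← laplacian_comp_of_analyticAt (f := fun w => f (φ w)) hψ
    (hfφ.comp _ (hφ.contDiffAt.restrict_scalars ℝ))]
  exact laplacian_congr_nhds (hleft.fun_comp f).symm

end ConformalInvariance

theorem ContinuousLinearMap.det_restrictScalars_toSpanSingleton (c : ℂ) :
    ((toSpanSingleton ℂ c).restrictScalars ℝ).det = normSq c := by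
  simp [ContinuousLinearMap.det, LinearMap.det_restrictScalars, Algebra.norm_complex_apply]

theorem setIntegral_image_eq_setIntegral_normSq_deriv_smul {F : Type*} [NormedAddCommGroup F]
    [NormedSpace ℝ F] {U : Set ℂ} {ψ : ℂ → ℂ} (hU : IsOpen U) (hψ : DifferentiableOn ℂ ψ U)
    (hinj : InjOn ψ U) (g : ℂ → F) :
    ∫ w in ψ '' U, g w = ∫ z in U, normSq (deriv ψ z) • g (ψ z) := by
  rw [integral_image_eq_integral_abs_det_fderiv_smul volume hU.measurableSet
    (fun z hz => ((hψ.differentiableAt (hU.mem_nhds hz)).hasDerivAt.hasFDerivAt.restrictScalars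
      ℝ).hasFDerivWithinAt) hinj]
  simp only [ContinuousLinearMap.det_restrictScalars_toSpanSingleton,
    abs_of_nonneg (normSq_nonneg _)]

section IntegrationByParts

variable {E : Type*} [NormedAddCommGroup E] [NormedSpace ℝ E] [FiniteDimensional ℝ E]
  [MeasurableSpace E] [BorelSpace E] {μ : Measure E} [μ.IsAddHaarMeasure] {u f : E → ℝ}

theorem integral_mul_fderiv_eq_neg_fderiv_mul_of_hasCompactSupport (hu : ContDiff ℝ 1 u)
    (hf : ContDiff ℝ 1 f) (hcu : HasCompactSupport u) (v : E) :
    ∫ x, u x * fderiv ℝ f x v ∂μ = -∫ x, fderiv ℝ u x v * f x ∂μ := by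
  have hu' : Continuous (fderiv ℝ u · v) := (hu.fderiv_apply_const (m := 0) le_rfl v).continuous
  have hf' : Continuous (fderiv ℝ f · v) := (hf.fderiv_apply_const (m := 0) le_rfl v).continuous
  exact integral_mul_fderiv_eq_neg_fderiv_mul_of_integrable
    ((hu'.mul hf.continuous).integrable_of_hasCompactSupport
      (hcu.fderiv_apply (𝕜 := ℝ) v).mul_right)
    ((hu.continuous.mul hf').integrable_of_hasCompactSupport hcu.mul_right)
    ((hu.continuous.mul hf.continuous).integrable_of_hasCompactSupport hcu.mul_right)
    (fun x _ => hu.differentiable one_ne_zero x) (fun x _ => hf.differentiable one_ne_zero x)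

theorem integral_mul_fderiv_fderiv_eq (hu : ContDiff ℝ 2 u) (hf : ContDiff ℝ 2 f)
    (hcu : HasCompactSupport u) (v : E) :
    ∫ x, u x * fderiv ℝ (fderiv ℝ f · v) x v ∂μ = ∫ x, fderiv ℝ (fderiv ℝ u · v) x v * f x ∂μ := by
  rw [integral_mul_fderiv_eq_neg_fderiv_mul_of_hasCompactSupport (hu.of_le one_le_two)
      (hf.fderiv_apply_const le_rfl v) hcu,
    integral_mul_fderiv_eq_neg_fderiv_mul_of_hasCompactSupport (hu.fderiv_apply_const le_rfl v)
      (hf.of_le one_le_two) (hcu.fderiv_apply (𝕜 := ℝ) v), neg_neg]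

end IntegrationByParts

theorem integral_mul_laplacian_eq {u f : ℂ → ℝ} (hu : ContDiff ℝ 2 u) (hf : ContDiff ℝ 2 f)
    (hcu : HasCompactSupport u) :
    ∫ z, u z * laplacian f z = ∫ z, laplacian u z * f z := by
  have hleft (v : ℂ) : Integrable fun z => u z * fderiv ℝ (fderiv ℝ f · v) z v :=
    (hu.continuous.mul (hf.continuous_fderiv_fderiv_apply v)).integrable_of_hasCompactSupport
      hcu.mul_right
  have hright (v : ℂ) : Integrable fun z => fderiv ℝ (fderiv ℝ u · v) z v * f z :=
    ((hu.continuous_fderiv_fderiv_apply v).mul hf.continuous).integrable_of_hasCompactSupport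
      ((hcu.fderiv_apply (𝕜 := ℝ) v).fderiv_apply (𝕜 := ℝ) v).mul_right
  simp only [laplacian, mul_add, add_mul]
  rw [integral_add (hleft 1) (hleft I), integral_add (hright 1) (hright I),
    integral_mul_fderiv_fderiv_eq hu hf hcu, integral_mul_fderiv_fderiv_eq hu hf hcu]

theorem exists_contDiff_tsupport_subset_eventuallyEq_one {E : Type*} [NormedAddCommGroup E]
    [NormedSpace ℝ E] [FiniteDimensional ℝ E] {K W : Set E} (hK : IsCompact K) (hW : IsOpen W)
    (hKW : K ⊆ W) : ∃ χ : E → ℝ, ContDiff ℝ ∞ χ ∧ HasCompactSupport χ ∧ tsupport χ ⊆ W ∧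
      ∀ᶠ x in 𝓝ˢ K, χ x = 1 := by
  obtain ⟨L, hL, hKL, hLW⟩ := exists_compact_between hK hW hKW
  obtain ⟨χ, hχ1, hχ0, -⟩ := exists_contMDiffMap_one_nhds_of_subset_interior
    (modelWithCornersSelf ℝ E) (n := (⊤ : ℕ∞)) hK.isClosed hKL
  have hsupp : tsupport χ ⊆ L := closure_minimal (Function.support_subset_iff'.2 hχ0) hL.isClosed
  exact ⟨χ, contMDiff_iff_contDiff.1 χ.contMDiff, HasCompactSupport.intro hL hχ0,
    hsupp.trans hLW, hχ1⟩

theorem setIntegral_mul_laplacian_eq_zero_of_harmonicOnNhd {l f : ℂ → ℝ} {U : Set ℂ}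
    (hl : InnerProductSpace.HarmonicOnNhd l U) (hf : ContDiff ℝ 2 f) (hcf : HasCompactSupport f)
    (hfU : tsupport f ⊆ U) : ∫ z in U, l z * laplacian f z = 0 := by
  -- Green's identity, applied to a cutoff `χ * l` of `l` that agrees with `l` near `tsupport f`
  obtain ⟨χ, hχ, hcχ, hχW, hχ1⟩ := exists_contDiff_tsupport_subset_eventuallyEq_one hcf
    (InnerProductSpace.isOpen_setOfPred_harmonicAt l) (hfU.trans hl)
  set u := fun z => χ z * l z
  have hu : ContDiff ℝ 2 u := contDiff_of_tsupport fun x hx =>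
    (hχ.of_le ENat.LEInfty.out).contDiffAt.mul (hχW (tsupport_mul_subset_left hx)).1
  have hlu (z : ℂ) : l z * laplacian f z = u z * laplacian f z := by
    by_cases hz : z ∈ tsupport f
    · simp [u, (hχ1.filter_mono (nhds_le_nhdsSet hz)).self_of_nhds]
    · simp [laplacian_eq_zero_of_notMem_tsupport hz]
  have hΔu (z : ℂ) : laplacian u z * f z = 0 := by
    by_cases hz : z ∈ tsupport f
    · have hul : u =ᶠ[𝓝 z] l :=
        (hχ1.filter_mono (nhds_le_nhdsSet hz)).mono fun w hw => by simp [u, hw]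
      rw [laplacian_congr_nhds hul, (hl z (hfU hz)).laplacian_eq_zero, zero_mul]
    · rw [image_eq_zero_of_notMem_tsupport hz, mul_zero]
  rw [setIntegral_eq_integral_of_forall_compl_eq_zero fun z hz => by
      rw [laplacian_eq_zero_of_notMem_tsupport (fun h => hz (hfU h)), mul_zero]]
  simp only [hlu, integral_mul_laplacian_eq hu hf hcχ.mul_right, hΔu, integral_zero]

theorem ContinuousOn.integrableOn_mul_of_tsupport_subset {X : Type*} [TopologicalSpace X]
    [T2Space X] [MeasurableSpace X] [OpensMeasurableSpace X] {μ : Measure X}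
    [IsFiniteMeasureOnCompacts μ] {F G : X → ℝ} {U : Set X} (hF : ContinuousOn F U)
    (hU : MeasurableSet U) (hG : Continuous G) (hcG : HasCompactSupport G)
    (hGU : tsupport G ⊆ U) : IntegrableOn (fun x => F x * G x) U μ :=
  ((hF.mono hGU).mul hG.continuousOn).integrableOn_compact hcG |>.of_forall_sdiff_eq_zero hU
    fun _ hx => by simp [image_eq_zero_of_notMem_tsupport hx.2]

section CoordinateChange

variable {U V : Set ℂ} {ψ ψinv : ℂ → ℂ}

theorem laplacian_eq_normSq_deriv_mul_laplacian_indicator (hU : IsOpen U) (hV : IsOpen V)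
    (hψ : DifferentiableOn ℂ ψ U) (hψinv : DifferentiableOn ℂ ψinv V) (hmaps : MapsTo ψ U V)
    (hleft : ∀ z ∈ U, ψinv (ψ z) = z) {f : ℂ → ℝ} (hf : ContDiff ℝ 2 f) {z : ℂ} (hz : z ∈ U) :
    laplacian f z =
      normSq (deriv ψ z) * laplacian (V.indicator fun w => f (ψinv w)) (ψ z) := by
  rw [laplacian_congr_nhds (eventually_of_mem (hV.mem_nhds (hmaps hz))
    fun w hw => indicator_of_mem hw _)]
  exact laplacian_eq_normSq_deriv_mul_laplacian_comp (hψ.analyticOnNhd hU z hz)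
    (hψinv.analyticOnNhd hV _ (hmaps hz)) (eventually_of_mem (hU.mem_nhds hz) hleft)
    hf.contDiffAt

theorem harmonicOnNhd_log_norm_deriv (hU : IsOpen U) (hV : IsOpen V)
    (hψ : DifferentiableOn ℂ ψ U) (hψinv : DifferentiableOn ℂ ψinv V) (hmaps : MapsTo ψ U V)
    (hleft : ∀ z ∈ U, ψinv (ψ z) = z) :
    InnerProductSpace.HarmonicOnNhd (fun z => Real.log ‖deriv ψ z‖) U := fun z hz =>
  (hψ.analyticOnNhd hU z hz).deriv.harmonicAt_log_norm <| deriv_ne_zero_of_leftInverse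
    (hψ.differentiableAt (hU.mem_nhds hz)) (hψinv.differentiableAt (hV.mem_nhds (hmaps hz)))
    (eventually_of_mem (hU.mem_nhds hz) hleft)

theorem setIntegral_mul_laplacian_indicator_eq (hU : IsOpen U) (hV : IsOpen V)
    (hψ : DifferentiableOn ℂ ψ U) (hψinv : DifferentiableOn ℂ ψinv V) (hbij : BijOn ψ U V) (hleft : ∀ z ∈ U, ψinv (ψ z) = z) (h : ℂ → ℝ) {f : ℂ → ℝ}
    (hf : ContDiff ℝ 2 f) :
    ∫ w in V, h w * laplacian (V.indicator fun w => f (ψinv w)) w =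
      ∫ z in U, h (ψ z) * laplacian f z := by
  rw [← hbij.image_eq, setIntegral_image_eq_setIntegral_normSq_deriv_smul hU hψ hbij.injOn]
  refine setIntegral_congr_fun hU.measurableSet fun z hz => ?_
  rw [hbij.image_eq, laplacian_eq_normSq_deriv_mul_laplacian_indicator hU hV hψ hψinv
    hbij.mapsTo hleft hf hz, smul_eq_mul]
  ring

end CoordinateChange

theorem lqg_curvature_coordinate_change_general
    (U V : Set ℂ) (hU : IsOpen U) (hV : IsOpen V)
    (ψ ψinv : ℂ → ℂ)
    (hψ : DifferentiableOn ℂ ψ U) (hψinv : DifferentiableOn ℂ ψinv V)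
    (hbij : Set.BijOn ψ U V)
    (hleft : ∀ z ∈ U, ψinv (ψ z) = z)
    (h : ℂ → ℝ) (hh : ContinuousOn h V) (Q : ℝ)
    (f : ℂ → ℝ) (hf : ContDiff ℝ 2 f) (hsupp : HasCompactSupport f)
    (hfU : tsupport f ⊆ U) :
    ∫ z in U, (h (ψ z) + Q * Real.log ‖deriv ψ z‖) * laplacian f z
      = ∫ w in V, h w * laplacian (Set.indicator V (fun w => f (ψinv w))) w := by
  have hlog := harmonicOnNhd_log_norm_deriv hU hV hψ hψinv hbij.mapsTo hleft
  have hint (F : ℂ → ℝ) (hF : ContinuousOn F U) : IntegrableOn (fun z => F z * laplacian f z) U :=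
    hF.integrableOn_mul_of_tsupport_subset hU.measurableSet hf.continuous_laplacian
      hsupp.laplacian (tsupport_laplacian_subset.trans hfU)
  rw [setIntegral_mul_laplacian_indicator_eq hU hV hψ hψinv hbij hleft h hf]
  calc ∫ z in U, (h (ψ z) + Q * Real.log ‖deriv ψ z‖) * laplacian f z
      = (∫ z in U, h (ψ z) * laplacian f z) +
          Q * ∫ z in U, Real.log ‖deriv ψ z‖ * laplacian f z := by
        rw [← integral_const_mul, ← integral_add (hint (fun z => h (ψ z))
          (hh.comp hψ.continuousOn hbij.mapsTo)) ((hint _ hlog.continuousOn).const_mul Q)]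
        simp only [add_mul, mul_assoc]
    _ = ∫ z in U, h (ψ z) * laplacian f z := by
        rw [setIntegral_mul_laplacian_eq_zero_of_harmonicOnNhd hlog hf hsupp hfU, mul_zero,
          add_zero]

/-- Invariance of the weak LQG curvature pairing under conformal coordinate change. -/
theorem lqg_curvature_coordinate_change
    (U V : Set ℂ) (hU : IsOpen U) (hV : IsOpen V)
    (ψ ψinv : ℂ → ℂ)
    (hψ : DifferentiableOn ℂ ψ U) (hψinv : DifferentiableOn ℂ ψinv V)
    (hbij : Set.BijOn ψ U V)
    (hleft : ∀ z ∈ U, ψinv (ψ z) = z) (hright : ∀ w ∈ V, ψ (ψinv w) = w)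
    (h : ℂ → ℝ) (hh : ContinuousOn h V) (Q : ℝ)
    (f : ℂ → ℝ) (hf : ContDiff ℝ 2 f) (hsupp : HasCompactSupport f)
    (hfU : tsupport f ⊆ U) :
    ∫ z in U, (h (ψ z) + Q * Real.log ‖deriv ψ z‖) * laplacian f z
      = ∫ w in V, h w * laplacian (Set.indicator V (fun w => f (ψinv w))) w :=
  lqg_curvature_coordinate_change_general U V hU hV ψ ψinv hψ hψinv hbij hleft h hh Q f hf hsupp hfU
end

section
/- Let X be a random variable with the Poisson distribution of parameter λ > 0. Then for every x ≥ 0, ℙ(X > λ + x) ≤ exp(−x²/(2(λ + x))). -/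
/-!
Chernoff's method with the non-optimal parameter `t = x / (λ + x)`: the Poisson moment generating
function gives `ℙ(X > a) ≤ exp (λ (eᵗ - 1) - t a)` for `a = λ + x`, and since `λ = a (1 - t)` the
exponent equals `a ((1 - t) eᵗ - 1)`, which the elementary inequality `(1 - t) eᵗ ≤ 1 - t² / 2`
bounds by `-a t² / 2 = -x² / (2 (λ + x))`.
-/

open MeasureTheory

section
open Real Nat

lemma Real.one_sub_mul_exp_le {t : ℝ} (ht : 0 ≤ t) : (1 - t) * exp t ≤ 1 - t ^ 2 / 2 := by
  -- `1 - s ^ 2 / 2 - (1 - s) * exp s` vanishes at `0` and has derivative `s * (exp s - 1) ≥ 0`.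
  let f : ℝ → ℝ := fun s ↦ 1 - s ^ 2 / 2 - (1 - s) * exp s
  have hf : ∀ s, HasDerivAt f (s * (exp s - 1)) s := fun s ↦
    ((hasDerivAt_id s).pow 2 |>.div_const 2 |>.const_sub 1).sub
      (((hasDerivAt_id s).const_sub 1).mul (hasDerivAt_exp s)) |>.congr_deriv (by simp; ring)
  have hmono : MonotoneOn f (Set.Ici 0) :=
    monotoneOn_of_hasDerivWithinAt_nonneg (convex_Ici 0)
      (fun s _ ↦ (hf s).continuousAt.continuousWithinAt) (fun s _ ↦ (hf s).hasDerivWithinAt)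
      fun s hs ↦ by
        rw [interior_Ici] at hs
        exact mul_nonneg (le_of_lt hs) (by linarith [add_one_le_exp s, hs.out])
  have := hmono Set.self_mem_Ici ht ht
  norm_num [f] at this
  linarith

lemma hasSum_poisson_mul_exp (lam t : ℝ) :
    HasSum (fun k : ℕ ↦ exp (-lam) * lam ^ k / k ! * exp (t * k)) (exp (lam * (exp t - 1))) := by
  have h := (NormedSpace.expSeries_div_hasSum_exp (lam * exp t)).mul_left (exp (-lam))
  rw [← exp_eq_exp_ℝ, ← exp_add, show -lam + lam * exp t = lam * (exp t - 1) by ring] at h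
  refine h.congr_fun fun k ↦ ?_
  rw [mul_pow, ← exp_nat_mul, mul_comm t]
  ring

lemma measure_lt_le_tsum_mul_exp {Ω : Type*} [MeasurableSpace Ω] (μ : Measure Ω) (X : Ω → ℕ)
    (a : ℝ) {t : ℝ} (ht : 0 ≤ t) :
    μ {ω | a < X ω} ≤ ∑' k : ℕ, μ {ω | X ω = k} * ENNReal.ofReal (exp (t * (k - a))) := by
  have hcover : {ω | a < X ω} ⊆ ⋃ k : ℕ, {ω | X ω = k ∧ a < k} := fun ω hω ↦
    Set.mem_iUnion.mpr ⟨X ω, rfl, hω⟩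
  refine (measure_mono hcover).trans <| (measure_iUnion_le _).trans <|
    ENNReal.tsum_le_tsum fun k ↦ ?_
  by_cases hk : a < k
  · have hexp : 1 ≤ ENNReal.ofReal (exp (t * (k - a))) :=
      ENNReal.one_le_ofReal.mpr (one_le_exp (mul_nonneg ht (by linarith)))
    simpa only [hk, and_true] using le_mul_of_one_le_right' hexp
  · simp [hk]

lemma measure_lt_le_exp_of_poisson {Ω : Type*} [MeasurableSpace Ω] (μ : Measure Ω) (X : Ω → ℕ)
    {lam : ℝ} (hlam : 0 ≤ lam)
    (hdist : ∀ k : ℕ, μ {ω | X ω = k} = ENNReal.ofReal (exp (-lam) * lam ^ k / k !))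
    (a : ℝ) {t : ℝ} (ht : 0 ≤ t) :
    μ {ω | a < X ω} ≤ ENNReal.ofReal (exp (lam * (exp t - 1) - t * a)) := by
  have hsum := (hasSum_poisson_mul_exp lam t).mul_right (exp (-(t * a)))
  calc μ {ω | a < X ω}
      ≤ ∑' k : ℕ, μ {ω | X ω = k} * ENNReal.ofReal (exp (t * (k - a))) :=
        measure_lt_le_tsum_mul_exp μ X a ht
    _ = ∑' k : ℕ, ENNReal.ofReal (exp (-lam) * lam ^ k / k ! * exp (t * k) * exp (-(t * a))) := by
        congr 1; ext k
        rw [hdist, ← ENNReal.ofReal_mul (by positivity), mul_assoc, ← exp_add]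
        ring_nf
    _ = ENNReal.ofReal (exp (lam * (exp t - 1) - t * a)) := by
        rw [← ENNReal.ofReal_tsum_of_nonneg (fun k ↦ by positivity) hsum.summable, hsum.tsum_eq,
          ← exp_add, ← sub_eq_add_neg]

lemma poisson_chernoff_exponent_le {lam x : ℝ} (hx : 0 ≤ x) (ha : 0 < lam + x) :
    lam * (exp (x / (lam + x)) - 1) - x / (lam + x) * (lam + x) ≤ -x ^ 2 / (2 * (lam + x)) := by
  set a := lam + x
  set t := x / a
  have hta : a * t = x := mul_div_cancel₀ x ha.ne'
  have hlam : lam = a * (1 - t) := by rw [mul_one_sub, hta]; simp [a]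
  calc lam * (exp t - 1) - t * a = a * ((1 - t) * exp t - 1) := by rw [hlam]; ring
    _ ≤ a * (-t ^ 2 / 2) := by
        gcongr; linarith [Real.one_sub_mul_exp_le (t := t) (by positivity)]
    _ = -x ^ 2 / (2 * a) := by rw [← hta]; field_simp

end

theorem poisson_tail_bound_general
    {Ω : Type*} [MeasurableSpace Ω] (ℙ : Measure Ω)
    (X : Ω → ℕ) (lam : ℝ) (hlam : 0 < lam)
    (hdist : ∀ k : ℕ,
      ℙ {ω | X ω = k} = ENNReal.ofReal (Real.exp (-lam) * lam ^ k / (Nat.factorial k)))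
    (x : ℝ) (hx : 0 ≤ x) :
    ℙ {ω | lam + x < (X ω : ℝ)} ≤ ENNReal.ofReal (Real.exp (-x ^ 2 / (2 * (lam + x)))) := by
  have ha : 0 < lam + x := by positivity
  refine (measure_lt_le_exp_of_poisson ℙ X hlam.le hdist (lam + x)
    (t := x / (lam + x)) (by positivity)).trans ?_
  gcongr
  exact poisson_chernoff_exponent_le hx ha

/-- Bennett-type tail bound for the Poisson distribution: if `X` is Poisson with mean
`λ > 0`, then for `x ≥ 0`, `ℙ(X > λ + x) ≤ exp(−x²/(2(λ+x)))`. -/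
theorem poisson_tail_bound
    {Ω : Type*} [MeasurableSpace Ω] (ℙ : Measure Ω) [IsProbabilityMeasure ℙ]
    (X : Ω → ℕ) (hX : Measurable X) (lam : ℝ) (hlam : 0 < lam)
    (hdist : ∀ k : ℕ,
      ℙ {ω | X ω = k} = ENNReal.ofReal (Real.exp (-lam) * lam ^ k / (Nat.factorial k)))
    (x : ℝ) (hx : 0 ≤ x) :
    ℙ {ω | lam + x < (X ω : ℝ)} ≤ ENNReal.ofReal (Real.exp (-x ^ 2 / (2 * (lam + x)))) :=
  poisson_tail_bound_general ℙ X lam hlam hdist x hx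
end

section
/- Let (X_n) be a sequence of real-valued random variables on a probability space, let (a_n) and (b_n) be sequences of strictly positive real numbers, and let Y be a real-valued random variable with ℙ(Y = 0) = 0. If X_n/a_n → Y in probability and X_n/b_n → Y in probability as n → ∞, then a_n/b_n → 1. (This is the core of the proof that any normalization sequence (a_ε) for which the normalized discrete curvature sums converge in probability to the continuum curvature must be slowly varying.) -/
open MeasureTheory Filter Topology

/-! Along a subsequence on which both `X_n/a_n` and `X_n/b_n` converge almost surely, fix an
outcome `ω` with `Y ω ≠ 0`; there `a_n/b_n = (X_n/b_n)/(X_n/a_n) → Y ω / Y ω = 1`. Since every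
subsequence has such a further subsequence, the whole sequence `a_n/b_n` tends to `1`. -/

theorem tendsto_div_of_tendsto_div_of_tendsto_div {ι G₀ : Type*} [CommGroupWithZero G₀]
    [TopologicalSpace G₀] [T1Space G₀] [ContinuousMul G₀] [ContinuousInv₀ G₀] {l : Filter ι}
    {x a b : ι → G₀} {y : G₀} (hy : y ≠ 0) (ha : Tendsto (fun i => x i / a i) l (𝓝 y))
    (hb : Tendsto (fun i => x i / b i) l (𝓝 y)) :
    Tendsto (fun i => a i / b i) l (𝓝 1) := by
  have hquot := hb.div ha hy
  rw [div_self hy] at hquot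
  refine hquot.congr' ?_
  filter_upwards [ha.eventually_ne hy] with i hi
  exact div_div_div_cancel_left' _ _ (div_ne_zero_iff.mp hi).1

theorem MeasureTheory.TendstoInMeasure.exists_seq_tendsto_ae_pair {α E : Type*}
    [MeasurableSpace α] {μ : Measure α} [PseudoEMetricSpace E]
    {f g : ℕ → α → E} {F G : α → E}
    (hf : TendstoInMeasure μ f atTop F) (hg : TendstoInMeasure μ g atTop G) :
    ∃ ns : ℕ → ℕ, StrictMono ns ∧ ∀ᵐ x ∂μ,
      Tendsto (fun i => f (ns i) x) atTop (𝓝 (F x)) ∧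
      Tendsto (fun i => g (ns i) x) atTop (𝓝 (G x)) := by
  obtain ⟨ms, hms, hf_ae⟩ := hf.exists_seq_tendsto_ae
  obtain ⟨ks, hks, hg_ae⟩ := (hg.comp hms.tendsto_atTop).exists_seq_tendsto_ae
  refine ⟨ms ∘ ks, hms.comp hks, ?_⟩
  filter_upwards [hf_ae, hg_ae] with x hfx hgx
  exact ⟨hfx.comp hks.tendsto_atTop, hgx⟩

theorem normalization_ratio_tendsto_one_general
    {Ω : Type*} [MeasurableSpace Ω] (ℙ : Measure Ω) [IsProbabilityMeasure ℙ]
    (X : ℕ → Ω → ℝ) (a b : ℕ → ℝ)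
    (Y : Ω → ℝ) (hY : ℙ {ω | Y ω = 0} = 0)
    (h1 : TendstoInMeasure ℙ (fun n ω => X n ω / a n) atTop Y)
    (h2 : TendstoInMeasure ℙ (fun n ω => X n ω / b n) atTop Y) :
    Tendsto (fun n => a n / b n) atTop (nhds 1) := by
  refine tendsto_of_subseq_tendsto fun ns hns => ?_
  obtain ⟨ms, -, hae⟩ := (h1.comp hns).exists_seq_tendsto_ae_pair (h2.comp hns)
  have hY_ne : ∀ᵐ ω ∂ℙ, Y ω ≠ 0 := by simpa [ae_iff] using hY
  obtain ⟨ω, hω, h1ω, h2ω⟩ := (hY_ne.and hae).exists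
  exact ⟨ms, tendsto_div_of_tendsto_div_of_tendsto_div hω h1ω h2ω⟩

/-- If `X_n/a_n → Y` and `X_n/b_n → Y` in probability, where `a_n, b_n > 0` and
`ℙ(Y = 0) = 0`, then `a_n/b_n → 1`. -/
theorem normalization_ratio_tendsto_one
    {Ω : Type*} [MeasurableSpace Ω] (ℙ : Measure Ω) [IsProbabilityMeasure ℙ]
    (X : ℕ → Ω → ℝ) (a b : ℕ → ℝ) (ha : ∀ n, 0 < a n) (hb : ∀ n, 0 < b n)
    (Y : Ω → ℝ) (hY : ℙ {ω | Y ω = 0} = 0)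
    (h1 : TendstoInMeasure ℙ (fun n ω => X n ω / a n) atTop Y)
    (h2 : TendstoInMeasure ℙ (fun n ω => X n ω / b n) atTop Y) :
    Tendsto (fun n => a n / b n) atTop (nhds 1) :=
  normalization_ratio_tendsto_one_general ℙ X a b Y hY h1 h2
end

section
/- Let U, V ⊆ ℂ be open sets, let ψ : U → V be a holomorphic bijection whose inverse is also holomorphic, and let f : V → ℝ be continuously differentiable. Then the Dirichlet energy is conformally invariant: ∫_U ‖∇(f∘ψ)(z)‖² dz = ∫_V ‖∇f(w)‖² dw, where both integrals are with respect to Lebesgue measure and take values in [0, ∞]. -/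
open MeasureTheory
open scoped ENNReal

/-! The real derivative of a holomorphic `ψ` at `z` is multiplication by `ψ' z`, i.e. a rotation
scaled by `‖ψ' z‖`. So the chain rule gives `‖∇(f ∘ ψ) z‖ ^ 2 = ‖ψ' z‖ ^ 2 * ‖∇f (ψ z)‖ ^ 2`, and
`‖ψ' z‖ ^ 2` is exactly the Jacobian determinant of `ψ` in the change of variables `w = ψ z`. -/

theorem Complex.smul_one_eq_norm_smul_rotation (c : ℂ) :
    c • (1 : ℂ →L[ℝ] ℂ) = ‖c‖ • (rotation (Circle.exp (arg c)) : ℂ →L[ℝ] ℂ) := by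
  ext1 x
  change c * x = ‖c‖ * (Circle.exp (arg c) * x)
  rw [Circle.coe_exp, ← mul_assoc, Complex.norm_mul_exp_arg_mul_I]

theorem ContinuousLinearMap.norm_comp_complex_smul_one {F : Type*} [NormedAddCommGroup F]
    [NormedSpace ℝ F] (A : ℂ →L[ℝ] F) (c : ℂ) : ‖A.comp (c • (1 : ℂ →L[ℝ] ℂ))‖ = ‖c‖ * ‖A‖ := by
  rw [Complex.smul_one_eq_norm_smul_rotation, ContinuousLinearMap.comp_smul, norm_smul, norm_norm,
    ContinuousLinearMap.opNorm_comp_linearIsometryEquiv]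

theorem Complex.det_smul_one (c : ℂ) : (c • (1 : ℂ →L[ℝ] ℂ)).det = Complex.normSq c := by
  have : ((c • (1 : ℂ →L[ℝ] ℂ) : ℂ →L[ℝ] ℂ) : ℂ →ₗ[ℝ] ℂ) = Algebra.lmul ℝ ℂ c := by
    ext x; simp
  rw [ContinuousLinearMap.det, this, ← Algebra.norm_apply, Algebra.norm_complex_apply]

theorem lintegral_image_eq_lintegral_enorm_deriv_sq_mul {μ : Measure ℂ} [μ.IsAddHaarMeasure]
    {s : Set ℂ} {ψ ψ' : ℂ → ℂ} (hs : MeasurableSet s)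
    (hψ' : ∀ z ∈ s, HasDerivWithinAt ψ (ψ' z) s z) (hψ : s.InjOn ψ) (g : ℂ → ℝ≥0∞) :
    ∫⁻ w in ψ '' s, g w ∂μ = ∫⁻ z in s, ‖ψ' z‖ₑ ^ 2 * g (ψ z) ∂μ := by
  rw [lintegral_image_eq_lintegral_abs_det_fderiv_mul μ hs
    (fun z hz => (hψ' z hz).complexToReal_fderiv) hψ]
  simp only [Complex.det_smul_one, Complex.normSq_eq_norm_sq, abs_pow, abs_norm,
    ENNReal.ofReal_pow (norm_nonneg _), ofReal_norm]

theorem HasDerivAt.enorm_fderiv_comp {F : Type*} [NormedAddCommGroup F] [NormedSpace ℝ F]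
    {ψ : ℂ → ℂ} {c z : ℂ} {f : ℂ → F} (hψ : HasDerivAt ψ c z)
    (hf : DifferentiableAt ℝ f (ψ z)) :
    ‖fderiv ℝ (f ∘ ψ) z‖ₑ = ‖c‖ₑ * ‖fderiv ℝ f (ψ z)‖ₑ := by
  rw [(hf.hasFDerivAt.comp z hψ.complexToReal_fderiv).fderiv, ← ofReal_norm,
    ContinuousLinearMap.norm_comp_complex_smul_one, ENNReal.ofReal_mul (norm_nonneg _),
    ofReal_norm, ofReal_norm]

theorem dirichlet_energy_conformal_invariance_general
    (U V : Set ℂ) (hU : IsOpen U) (hV : IsOpen V)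
    (ψ : ℂ → ℂ)
    (hψ : DifferentiableOn ℂ ψ U)
    (hbij : Set.BijOn ψ U V)
    (f : ℂ → ℝ) (hf : ContDiffOn ℝ 1 f V) :
    ∫⁻ z in U, (‖fderiv ℝ (f ∘ ψ) z‖₊ : ℝ≥0∞) ^ 2 =
      ∫⁻ w in V, (‖fderiv ℝ f w‖₊ : ℝ≥0∞) ^ 2 := by
  have hψ' : ∀ z ∈ U, HasDerivAt ψ (deriv ψ z) z := fun z hz =>
    (hψ.differentiableAt (hU.mem_nhds hz)).hasDerivAt
  simp only [← enorm_eq_nnnorm]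
  rw [← hbij.image_eq, lintegral_image_eq_lintegral_enorm_deriv_sq_mul hU.measurableSet
    (fun z hz => (hψ' z hz).hasDerivWithinAt) hbij.injOn]
  refine setLIntegral_congr_fun hU.measurableSet fun z hz => ?_
  have hf' : DifferentiableAt ℝ f (ψ z) :=
    (hf.differentiableOn one_ne_zero).differentiableAt (hV.mem_nhds (hbij.mapsTo hz))
  rw [(hψ' z hz).enorm_fderiv_comp hf', mul_pow]

/-- Conformal invariance of the Dirichlet energy: for a holomorphic bijection `ψ : U → V`
with holomorphic inverse and `f : V → ℝ` of class `C¹`,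
`∫_U ‖∇(f∘ψ)‖² = ∫_V ‖∇f‖²` (with values in `[0,∞]`). -/
theorem dirichlet_energy_conformal_invariance
    (U V : Set ℂ) (hU : IsOpen U) (hV : IsOpen V)
    (ψ ψinv : ℂ → ℂ)
    (hψ : DifferentiableOn ℂ ψ U) (hψinv : DifferentiableOn ℂ ψinv V)
    (hbij : Set.BijOn ψ U V)
    (hleft : ∀ z ∈ U, ψinv (ψ z) = z) (hright : ∀ w ∈ V, ψ (ψinv w) = w)
    (f : ℂ → ℝ) (hf : ContDiffOn ℝ 1 f V) :
    ∫⁻ z in U, (‖fderiv ℝ (f ∘ ψ) z‖₊ : ℝ≥0∞) ^ 2 =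
      ∫⁻ w in V, (‖fderiv ℝ f w‖₊ : ℝ≥0∞) ^ 2 :=
  dirichlet_energy_conformal_invariance_general U V hU hV ψ hψ hbij f hf
end
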